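/- arXiv:2312.07792 — 5 statements merged into one kernel-verified Lean document; each statement's English description precedes it below -/
import Mathlib

section
/- Let P_θ denote the Cauchy distribution on ℝ with location parameter θ and scale 1. Then the Kullback–Leibler divergence satisfies KL(P_{θ_1}, P_{θ_2}) = log(1 + (θ_1 - θ_2)^2 / 4), and in particular KL(P_{θ_1}, P_{θ_2}) ≤ (θ_1 - θ_2)^2 / 4. -/
open MeasureTheory Real

/-- The density of the Cauchy distribution with location `θ` and scale `1`. -/
noncomputable def cauchyPdf (θ x : ℝ) : ℝ := 1 / (π * (1 + (x - θ) ^ 2))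

/-!
After translating by `θ₁`, the divergence is `K (θ₁ - θ₂)` where
`K δ = ∫ p₀(x) (log (1 + (x + δ)²) - log (1 + x²)) dx`, `p₀` the standard Cauchy density.
The `δ`-derivative of the integrand is `p₀(x) · 2(x + δ)/(1 + (x + δ)²)`, dominated by `p₀`,
so `K' δ` is the integral of a rational function; partial fractions give `K' δ = 2δ/(δ² + 4)`.
Since `K 0 = 0`, `K δ = log (1 + δ²/4)`, and the bound is `log (1 + t) ≤ t`.
-/

open Filter Topology

lemma cauchyPdf_eq_cauchyPDFReal (θ x : ℝ) :
    cauchyPdf θ x = ProbabilityTheory.cauchyPDFReal θ 1 x := by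
  simp [cauchyPdf, ProbabilityTheory.cauchyPDFReal, add_comm, mul_comm]

lemma cauchyPdf_pos (θ x : ℝ) : 0 < cauchyPdf θ x := by
  unfold cauchyPdf
  positivity

lemma integrable_cauchyPdf (θ : ℝ) : Integrable (cauchyPdf θ) := by
  simpa [← funext (cauchyPdf_eq_cauchyPDFReal θ)] using
    ProbabilityTheory.integrable_cauchyPDFReal θ (γ := 1)

lemma cauchyPdf_eq_cauchyPdf_zero (θ x : ℝ) : cauchyPdf θ x = cauchyPdf 0 (x - θ) := by
  simp [cauchyPdf]

lemma log_cauchyPdf_div_cauchyPdf (θ₁ θ₂ x : ℝ) :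
    log (cauchyPdf θ₁ x / cauchyPdf θ₂ x)
      = log (1 + (x - θ₂) ^ 2) - log (1 + (x - θ₁) ^ 2) := by
  have h₁ : (0 : ℝ) < 1 + (x - θ₁) ^ 2 := by positivity
  have h₂ : (0 : ℝ) < 1 + (x - θ₂) ^ 2 := by positivity
  rw [← log_div h₂.ne' h₁.ne']
  congr 1
  simp only [cauchyPdf]
  field_simp

lemma hasDerivAt_log_one_add_sq (t : ℝ) :
    HasDerivAt (fun u => log (1 + u ^ 2)) (2 * t / (1 + t ^ 2)) t := by
  simpa using ((hasDerivAt_pow 2 t).const_add 1).log (by positivity)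

lemma abs_two_mul_div_one_add_sq_le_one (t : ℝ) : |2 * t / (1 + t ^ 2)| ≤ 1 := by
  have h : (0 : ℝ) < 1 + t ^ 2 := by positivity
  rw [abs_div, abs_of_pos h, div_le_one h, abs_mul, abs_two]
  nlinarith [sq_nonneg (|t| - 1), sq_abs t]

lemma abs_log_one_add_sq_sub_le (u v : ℝ) :
    |log (1 + u ^ 2) - log (1 + v ^ 2)| ≤ |u - v| := by
  simpa using Convex.norm_image_sub_le_of_norm_hasDerivWithin_le
    (fun t _ => (hasDerivAt_log_one_add_sq t).hasDerivWithinAt)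
    (fun t _ => abs_two_mul_div_one_add_sq_le_one t) convex_univ (Set.mem_univ v) (Set.mem_univ u)

lemma tendsto_log_one_add_sq_add_sub_cobounded (δ : ℝ) :
    Tendsto (fun x => log (1 + (x + δ) ^ 2) - log (1 + x ^ 2))
      (Bornology.cobounded ℝ) (𝓝 0) := by
  have hinv := tendsto_inv₀_cobounded (α := ℝ)
  have hratio : Tendsto (fun x : ℝ => (x⁻¹ ^ 2 + (1 + δ * x⁻¹) ^ 2) / (x⁻¹ ^ 2 + 1))
      (Bornology.cobounded ℝ) (𝓝 1) := by
    convert ((hinv.pow 2).add (((hinv.const_mul δ).const_add 1).pow 2)).div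
      ((hinv.pow 2).add_const 1) (by norm_num) using 2 <;> norm_num
  have hlog := (continuousAt_log one_ne_zero).tendsto.comp hratio
  rw [log_one] at hlog
  refine hlog.congr' ?_
  filter_upwards [Bornology.eventually_ne_cobounded 0] with x hx
  have hx0 : (0 : ℝ) < 1 + x ^ 2 := by positivity
  rw [Function.comp_apply, ← log_div (by positivity) hx0.ne']
  congr 1
  field_simp

lemma tendsto_arctan_add_const_atTop (δ : ℝ) :
    Tendsto (fun x => arctan (x + δ)) atTop (𝓝 (π / 2)) :=
  (tendsto_arctan_atTop.mono_right nhdsWithin_le_nhds).comp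
    (tendsto_atTop_add_const_right _ δ tendsto_id)

lemma tendsto_arctan_add_const_atBot (δ : ℝ) :
    Tendsto (fun x => arctan (x + δ)) atBot (𝓝 (-(π / 2))) :=
  (tendsto_arctan_atBot.mono_right nhdsWithin_le_nhds).comp
    (tendsto_atBot_add_const_right _ δ tendsto_id)

lemma integrable_cauchyPdf_mul_two_mul_div (θ δ : ℝ) :
    Integrable fun x => cauchyPdf θ x * (2 * (x + δ) / (1 + (x + δ) ^ 2)) :=
  (integrable_cauchyPdf θ).mul_bdd (by fun_prop : Measurable _).aestronglyMeasurable
    (ae_of_all _ fun x => abs_two_mul_div_one_add_sq_le_one (x + δ))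

lemma integral_cauchyPdf_mul_two_mul_div_of_ne_zero {δ : ℝ} (hδ : δ ≠ 0) :
    ∫ x, cauchyPdf 0 x * (2 * (x + δ) / (1 + (x + δ) ^ 2)) = 2 * δ / (δ ^ 2 + 4) := by
  -- partial fractions of `2 (x + δ) / ((1 + x²) (1 + (x + δ)²))`
  set a := 1 / (π * (δ ^ 2 + 4))
  set b := 1 / (π * δ * (δ ^ 2 + 4))
  let F x := a * (log (1 + (x + δ) ^ 2) - log (1 + x ^ 2))
    + b * ((2 * δ ^ 2 + 4) * arctan x - 4 * arctan (x + δ))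
  have hF : ∀ x, HasDerivAt F (cauchyPdf 0 x * (2 * (x + δ) / (1 + (x + δ) ^ 2))) x := by
    intro x
    have hlog := ((hasDerivAt_log_one_add_sq (x + δ)).comp_add_const x δ).sub
      (hasDerivAt_log_one_add_sq x)
    have harctan := ((hasDerivAt_arctan x).const_mul (2 * δ ^ 2 + 4)).sub
      (((hasDerivAt_arctan (x + δ)).comp_add_const x δ).const_mul 4)
    refine ((hlog.const_mul a).add (harctan.const_mul b)).congr_deriv ?_
    have : (0 : ℝ) < 1 + (x + δ) ^ 2 := by positivity
    simp only [cauchyPdf, a, b, sub_zero]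
    field_simp
    ring
  have htop : Tendsto F atTop (𝓝 (a * 0 + b * ((2 * δ ^ 2 + 4) * (π / 2) - 4 * (π / 2)))) :=
    ((tendsto_log_one_add_sq_add_sub_cobounded δ).mono_left
      IsOrderBornology.atTop_le_cobounded |>.const_mul a).add
      ((((tendsto_arctan_atTop.mono_right nhdsWithin_le_nhds).const_mul _).sub
        ((tendsto_arctan_add_const_atTop δ).const_mul 4)).const_mul b)
  have hbot : Tendsto F atBot (𝓝 (a * 0 + b * ((2 * δ ^ 2 + 4) * -(π / 2) - 4 * -(π / 2)))) :=
    ((tendsto_log_one_add_sq_add_sub_cobounded δ).mono_left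
      IsOrderBornology.atBot_le_cobounded |>.const_mul a).add
      ((((tendsto_arctan_atBot.mono_right nhdsWithin_le_nhds).const_mul _).sub
        ((tendsto_arctan_add_const_atBot δ).const_mul 4)).const_mul b)
  rw [integral_of_hasDerivAt_of_tendsto hF (integrable_cauchyPdf_mul_two_mul_div 0 δ) hbot htop]
  simp only [b]
  field_simp
  ring

lemma integral_cauchyPdf_mul_two_mul_div (δ : ℝ) :
    ∫ x, cauchyPdf 0 x * (2 * (x + δ) / (1 + (x + δ) ^ 2)) = 2 * δ / (δ ^ 2 + 4) := by
  rcases ne_or_eq δ 0 with hδ | rfl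
  · exact integral_cauchyPdf_mul_two_mul_div_of_ne_zero hδ
  -- the integrand is odd
  have h : ∫ x, cauchyPdf 0 x * (2 * (x + 0) / (1 + (x + 0) ^ 2))
      = -∫ x, cauchyPdf 0 x * (2 * (x + 0) / (1 + (x + 0) ^ 2)) := by
    conv_lhs => rw [← integral_neg_eq_self]
    rw [← integral_neg]
    congr 1 with x
    simp only [cauchyPdf]
    ring
  simp only [zero_pow two_ne_zero, mul_zero, zero_div]
  linarith

lemma integrable_cauchyPdf_mul_log_sub (θ δ : ℝ) :
    Integrable fun x => cauchyPdf θ x * (log (1 + (x + δ) ^ 2) - log (1 + x ^ 2)) :=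
  (integrable_cauchyPdf θ).mul_bdd (by fun_prop : Measurable _).aestronglyMeasurable
    (ae_of_all _ fun x => by simpa using abs_log_one_add_sq_sub_le (x + δ) x)

/-- `KL(P₀, P₋δ)`, with the log-ratio of the densities written out. -/
noncomputable def cauchyShiftKL (δ : ℝ) : ℝ :=
  ∫ x, cauchyPdf 0 x * (log (1 + (x + δ) ^ 2) - log (1 + x ^ 2))

lemma hasDerivAt_cauchyShiftKL (δ : ℝ) :
    HasDerivAt cauchyShiftKL (2 * δ / (δ ^ 2 + 4)) δ := by
  rw [← integral_cauchyPdf_mul_two_mul_div]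
  refine (hasDerivAt_integral_of_dominated_loc_of_deriv_le
    (F := fun t x => cauchyPdf 0 x * (log (1 + (x + t) ^ 2) - log (1 + x ^ 2)))
    (F' := fun t x => cauchyPdf 0 x * (2 * (x + t) / (1 + (x + t) ^ 2)))
    (bound := cauchyPdf 0) univ_mem
    (Eventually.of_forall fun t => (integrable_cauchyPdf_mul_log_sub 0 t).aestronglyMeasurable)
    (integrable_cauchyPdf_mul_log_sub 0 δ)
    (integrable_cauchyPdf_mul_two_mul_div 0 δ).aestronglyMeasurable
    (ae_of_all _ fun x t _ => ?_) (integrable_cauchyPdf 0)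
    (ae_of_all _ fun x t _ => ?_)).2
  · rw [norm_mul, Real.norm_of_nonneg (cauchyPdf_pos 0 x).le]
    exact mul_le_of_le_one_right (cauchyPdf_pos 0 x).le
      (abs_two_mul_div_one_add_sq_le_one (x + t))
  · exact (((hasDerivAt_log_one_add_sq (x + t)).comp_const_add x t).sub_const _).const_mul _

lemma cauchyShiftKL_eq (δ : ℝ) : cauchyShiftKL δ = log (1 + δ ^ 2 / 4) := by
  have hlog (t : ℝ) : HasDerivAt (fun u => log (1 + u ^ 2 / 4)) (2 * t / (t ^ 2 + 4)) t := by
    refine ((((hasDerivAt_pow 2 t).div_const 4).const_add 1).log (by positivity)).congr_deriv ?_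
    field_simp
    ring
  have hderiv (t : ℝ) : HasDerivAt (fun u => cauchyShiftKL u - log (1 + u ^ 2 / 4)) 0 t :=
    ((hasDerivAt_cauchyShiftKL t).sub (hlog t)).congr_deriv (sub_self _)
  have hconst := is_const_of_deriv_eq_zero (fun t => (hderiv t).differentiableAt)
    (fun t => (hderiv t).deriv) δ 0
  have hzero : cauchyShiftKL 0 = 0 := by simp [cauchyShiftKL]
  simp only [hzero] at hconst
  norm_num at hconst
  linarith

/-- The Kullback–Leibler divergence between two unit-scale Cauchy distributions with
location parameters `θ₁`, `θ₂` equals `log(1 + (θ₁ - θ₂)² / 4)`, and in particular is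
at most `(θ₁ - θ₂)² / 4`. -/
theorem cauchy_kl_divergence (θ₁ θ₂ : ℝ) :
    (∫ x : ℝ, cauchyPdf θ₁ x * Real.log (cauchyPdf θ₁ x / cauchyPdf θ₂ x))
      = Real.log (1 + (θ₁ - θ₂) ^ 2 / 4) ∧
    (∫ x : ℝ, cauchyPdf θ₁ x * Real.log (cauchyPdf θ₁ x / cauchyPdf θ₂ x))
      ≤ (θ₁ - θ₂) ^ 2 / 4 := by
  have hshift : ∫ x, cauchyPdf θ₁ x * log (cauchyPdf θ₁ x / cauchyPdf θ₂ x)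
      = cauchyShiftKL (θ₁ - θ₂) := by
    conv_rhs => rw [cauchyShiftKL, ← integral_sub_right_eq_self _ θ₁]
    congr 1 with x
    rw [log_cauchyPdf_div_cauchyPdf, cauchyPdf_eq_cauchyPdf_zero]
    ring_nf
  have hKL := hshift.trans (cauchyShiftKL_eq _)
  refine ⟨hKL, hKL ▸ ?_⟩
  linarith [log_le_sub_one_of_pos (by positivity : (0 : ℝ) < 1 + (θ₁ - θ₂) ^ 2 / 4)]
end

section
/- Let P be the propose-test-release mechanism based on a release mechanism Q and a test with acceptance probability λ. If the test mechanism λ is (ε_1, δ_1)-differentially private and λ(ν̂) < δ_3 whenever ν̂ is not (ε_2, δ_2)-safe for Q, then P is (ε_1 + ε_2, δ_1 + max(δ_2, δ_3))-differentially private. -/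
open MeasureTheory Real

noncomputable section

variable {D Θ : Type*} [MeasurableSpace Θ]

/-- `(ε, δ)`-differential privacy of a mechanism `M` with respect to the adjacency
relation `Adj`. -/
def IsDP {Ω : Type*} [MeasurableSpace Ω] (Adj : D → D → Prop) (M : D → Measure Ω)
    (ε δ : ℝ) : Prop :=
  ∀ x y, Adj x y → ∀ B, MeasurableSet B →
    M x B ≤ ENNReal.ofReal (exp ε) * M y B + ENNReal.ofReal δ

/-- The dataset `x` is `(ε, δ)`-safe for the release mechanism `Q`: the two-sided localized
differential privacy inequality holds between `Q x` and `Q y` for every adjacent `y`. -/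
def IsSafe (Adj : D → D → Prop) (Q : D → Measure Θ) (ε δ : ℝ) (x : D) : Prop :=
  ∀ y, Adj x y → ∀ B, MeasurableSet B →
    Q x B ≤ ENNReal.ofReal (exp ε) * Q y B + ENNReal.ofReal δ ∧
    Q y B ≤ ENNReal.ofReal (exp ε) * Q x B + ENNReal.ofReal δ

/-- The test mechanism with acceptance probability `lam`: a `Bernoulli(lam x)` output. -/
def testMech (lam : D → ℝ) (x : D) : Measure Bool :=
  ENNReal.ofReal (lam x) • Measure.dirac true +
    ENNReal.ofReal (1 - lam x) • Measure.dirac false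

/-- The propose-test-release mechanism based on `Q` and `lam`: with probability `lam x` it
releases a draw from `Q x`, otherwise it outputs the null symbol `⊥` (here `Sum.inr ()`). -/
def PTR (Q : D → Measure Θ) (lam : D → ℝ) (x : D) : Measure (Θ ⊕ Unit) :=
  ENNReal.ofReal (lam x) • (Q x).map Sum.inl +
    ENNReal.ofReal (1 - lam x) • Measure.dirac (Sum.inr ())

lemma testMech_apply_true (lam : D → ℝ) (x : D) :
    testMech lam x {true} = ENNReal.ofReal (lam x) := by
  simp [testMech, Measure.add_apply, Measure.smul_apply, smul_eq_mul]

lemma testMech_apply_false (lam : D → ℝ) (x : D) :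
    testMech lam x {false} = ENNReal.ofReal (1 - lam x) := by
  simp [testMech, Measure.add_apply, Measure.smul_apply, smul_eq_mul]

open scoped Classical in
lemma PTR_apply (Q : D → Measure Θ) (lam : D → ℝ) (x : D)
    (hl0 : 0 ≤ lam x) (hl1 : lam x ≤ 1) (B : Set (Θ ⊕ Unit)) (hB : MeasurableSet B)
    (hfin : Q x (Sum.inl ⁻¹' B) ≠ ⊤) :
    PTR Q lam x B = ENNReal.ofReal (lam x * (Q x (Sum.inl ⁻¹' B)).toReal
      + (1 - lam x) * (if Sum.inr () ∈ B then (1:ℝ) else 0)) := by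
  classical
  have h1 : (Q x).map Sum.inl B = Q x (Sum.inl ⁻¹' B) :=
    Measure.map_apply measurable_inl hB
  have h2 : Measure.dirac (Sum.inr () : Θ ⊕ Unit) B
      = ENNReal.ofReal (if Sum.inr () ∈ B then (1:ℝ) else 0) := by
    rw [Measure.dirac_apply' _ hB]
    by_cases h : (Sum.inr () : Θ ⊕ Unit) ∈ B <;> simp [h]
  have hc0 : (0:ℝ) ≤ (if Sum.inr () ∈ B then (1:ℝ) else 0) := by
    split_ifs <;> norm_num
  rw [PTR, Measure.add_apply, Measure.smul_apply, Measure.smul_apply, smul_eq_mul,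
    smul_eq_mul, h1, h2,
    ENNReal.ofReal_add (mul_nonneg hl0 ENNReal.toReal_nonneg)
      (mul_nonneg (by linarith) hc0),
    ENNReal.ofReal_mul hl0, ENNReal.ofReal_mul (by linarith : (0:ℝ) ≤ 1 - lam x),
    ENNReal.ofReal_toReal hfin]

set_option maxHeartbeats 1000000 in
lemma PTR_core (p q a b c e1 e2 d1 d2 d3 : ℝ)
    (hp0 : 0 ≤ p) (hp1 : p ≤ 1) (hq0 : 0 ≤ q) (hq1 : q ≤ 1)
    (ha0 : 0 ≤ a) (ha1 : a ≤ 1) (hb0 : 0 ≤ b) (hb1 : b ≤ 1)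
    (hc : c = 0 ∨ c = 1) (he1 : 1 ≤ e1) (he2 : 1 ≤ e2)
    (hd1 : 0 < d1) (hd2 : 0 < d2) (hd3 : 0 < d3)
    (ht1 : p ≤ e1 * q + d1) (ht2 : 1 - p ≤ e1 * (1 - q) + d1)
    (hmain : a ≤ e2 * b + d2 ∨ p < d3) :
    p * a + (1 - p) * c ≤ e1 * e2 * (q * b + (1 - q) * c) + (d1 + max d2 d3) := by
  have hm2 : d2 ≤ max d2 d3 := le_max_left _ _
  have hm3 : d3 ≤ max d2 d3 := le_max_right _ _
  have he10 : (0:ℝ) ≤ e1 := by linarith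
  have he20 : (0:ℝ) ≤ e2 := by linarith
  rcases hmain with hsafe | hun
  · rcases hc with rfl | rfl
    · -- c = 0
      rcases le_or_gt (e2 * b) 1 with h | h
      · have h1 : p * a ≤ p * (e2 * b + d2) := mul_le_mul_of_nonneg_left hsafe hp0
        have h2 : p * (e2 * b) ≤ (e1 * q + d1) * (e2 * b) :=
          mul_le_mul_of_nonneg_right ht1 (mul_nonneg he20 hb0)
        have h3 : d1 * (e2 * b) ≤ d1 * 1 := mul_le_mul_of_nonneg_left h hd1.le
        have h4 : p * d2 ≤ 1 * d2 := mul_le_mul_of_nonneg_right hp1 hd2.le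
        nlinarith [mul_nonneg hq0 hb0]
      · have h1 : p * a ≤ p * 1 := mul_le_mul_of_nonneg_left ha1 hp0
        have h2 : e1 * q * 1 ≤ e1 * q * (e2 * b) :=
          mul_le_mul_of_nonneg_left h.le (mul_nonneg he10 hq0)
        nlinarith
    · -- c = 1
      rcases le_or_gt (e2 * b) 1 with h | h
      · have h1 : p * a ≤ p * (e2 * b + d2) := mul_le_mul_of_nonneg_left hsafe hp0
        have h2 : (1 - p) * (1 - e2 * b) ≤ (e1 * (1 - q) + d1) * (1 - e2 * b) :=
          mul_le_mul_of_nonneg_right ht2 (by linarith)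
        have h3 : (1 - e1 * (1 - q)) ≤ e1 * q := by nlinarith
        have h4 : (e2 * b) * (1 - e1 * (1 - q)) ≤ (e2 * b) * (e1 * q) :=
          mul_le_mul_of_nonneg_left h3 (mul_nonneg he20 hb0)
        have he12 : e1 ≤ e1 * e2 := by nlinarith [mul_le_mul_of_nonneg_left he2 he10]
        have h5 : e1 * (1 - q) ≤ e1 * e2 * (1 - q) :=
          mul_le_mul_of_nonneg_right he12 (by linarith)
        have h6 : p * d2 ≤ 1 * d2 := mul_le_mul_of_nonneg_right hp1 hd2.le
        have h7 : d1 * (1 - e2 * b) ≤ d1 * 1 :=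
          mul_le_mul_of_nonneg_left (by nlinarith [mul_nonneg he20 hb0]) hd1.le
        nlinarith
      · have h1 : p * a ≤ p * 1 := mul_le_mul_of_nonneg_left ha1 hp0
        have k1 : (1:ℝ) ≤ q * (e2 * b) + e2 * (1 - q) := by
          nlinarith [mul_le_mul_of_nonneg_left h.le hq0,
            mul_le_mul_of_nonneg_right he2 (sub_nonneg.mpr hq1)]
        have k2 : q * (e2 * b) + e2 * (1 - q) ≤ e1 * (q * (e2 * b) + e2 * (1 - q)) :=
          le_mul_of_one_le_left (by linarith) he1
        have k3 : e1 * (q * (e2 * b) + e2 * (1 - q)) = e1 * e2 * (q * b + (1 - q) * 1) := by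
          ring
        linarith
  · rcases hc with rfl | rfl
    · have h1 : p * a ≤ p * 1 := mul_le_mul_of_nonneg_left ha1 hp0
      nlinarith [mul_nonneg (mul_nonneg he10 he20) (mul_nonneg hq0 hb0)]
    · have h1 : p * a ≤ p * 1 := mul_le_mul_of_nonneg_left ha1 hp0
      have he12 : e1 ≤ e1 * e2 := by nlinarith [mul_le_mul_of_nonneg_left he2 he10]
      have h5 : e1 * (1 - q) ≤ e1 * e2 * (1 - q) :=
        mul_le_mul_of_nonneg_right he12 (by linarith)
      nlinarith [mul_nonneg (mul_nonneg he10 he20) (mul_nonneg hq0 hb0)]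

/-- If the test mechanism is `(ε₁, δ₁)`-differentially private and `lam x < δ₃` whenever
`x` is not `(ε₂, δ₂)`-safe for `Q`, then the PTR mechanism based on `(Q, lam)` is
`(ε₁ + ε₂, δ₁ + max δ₂ δ₃)`-differentially private. -/
theorem PTR_is_DP (Adj : D → D → Prop) (hAdj : Symmetric Adj)
    (Q : D → Measure Θ) [∀ x, IsProbabilityMeasure (Q x)]
    (lam : D → ℝ) (hlam : ∀ x, 0 ≤ lam x ∧ lam x ≤ 1)
    (ε₁ ε₂ δ₁ δ₂ δ₃ : ℝ) (hε₁ : 0 < ε₁) (hε₂ : 0 < ε₂)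
    (hδ₁ : 0 < δ₁) (hδ₂ : 0 < δ₂) (hδ₃ : 0 < δ₃)
    (hTest : IsDP Adj (testMech lam) ε₁ δ₁)
    (hUnsafe : ∀ x, ¬ IsSafe Adj Q ε₂ δ₂ x → lam x < δ₃) :
    IsDP Adj (PTR Q lam) (ε₁ + ε₂) (δ₁ + max δ₂ δ₃) := by
  classical
  intro x y hxy B hB
  obtain ⟨hp0, hp1⟩ := hlam x
  obtain ⟨hq0, hq1⟩ := hlam y
  have hAm : MeasurableSet (Sum.inl ⁻¹' B : Set Θ) := hB.preimage measurable_inl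
  have hxfin : Q x (Sum.inl ⁻¹' B) ≠ ⊤ := measure_ne_top _ _
  have hyfin : Q y (Sum.inl ⁻¹' B) ≠ ⊤ := measure_ne_top _ _
  set a := (Q x (Sum.inl ⁻¹' B)).toReal with hadef
  set b := (Q y (Sum.inl ⁻¹' B)).toReal with hbdef
  have ha0 : 0 ≤ a := ENNReal.toReal_nonneg
  have hb0 : 0 ≤ b := ENNReal.toReal_nonneg
  have ha1 : a ≤ 1 := by
    simpa using ENNReal.toReal_mono ENNReal.one_ne_top (prob_le_one (μ := Q x))
  have hb1 : b ≤ 1 := by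
    simpa using ENNReal.toReal_mono ENNReal.one_ne_top (prob_le_one (μ := Q y))
  set c := (if Sum.inr () ∈ B then (1:ℝ) else 0) with hcdef
  have hc : c = 0 ∨ c = 1 := by
    rw [hcdef]; split_ifs <;> simp
  have he1 : 1 ≤ exp ε₁ := one_le_exp hε₁.le
  have he2 : 1 ≤ exp ε₂ := one_le_exp hε₂.le
  -- test DP facts
  have ht1 : lam x ≤ exp ε₁ * lam y + δ₁ := by
    have := hTest x y hxy {true} (measurableSet_singleton _)
    rw [testMech_apply_true, testMech_apply_true,
      ← ENNReal.ofReal_mul (exp_nonneg _),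
      ← ENNReal.ofReal_add (mul_nonneg (exp_nonneg _) hq0) hδ₁.le] at this
    exact (ENNReal.ofReal_le_ofReal_iff (by positivity)).mp this
  have ht2 : 1 - lam x ≤ exp ε₁ * (1 - lam y) + δ₁ := by
    have := hTest x y hxy {false} (measurableSet_singleton _)
    rw [testMech_apply_false, testMech_apply_false,
      ← ENNReal.ofReal_mul (exp_nonneg _),
      ← ENNReal.ofReal_add (mul_nonneg (exp_nonneg _) (by linarith)) hδ₁.le] at this
    refine (ENNReal.ofReal_le_ofReal_iff ?_).mp this
    have := mul_nonneg (exp_nonneg ε₁) (show (0:ℝ) ≤ 1 - lam y by linarith)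
    linarith
  -- safety alternative
  have hmain : a ≤ exp ε₂ * b + δ₂ ∨ lam x < δ₃ := by
    by_cases hs : IsSafe Adj Q ε₂ δ₂ x
    · left
      have := (hs y hxy _ hAm).1
      rw [(ENNReal.ofReal_toReal hxfin).symm, (ENNReal.ofReal_toReal hyfin).symm,
        ← hadef, ← hbdef, ← ENNReal.ofReal_mul (exp_nonneg _),
        ← ENNReal.ofReal_add (mul_nonneg (exp_nonneg _) hb0) hδ₂.le] at this
      exact (ENNReal.ofReal_le_ofReal_iff (by positivity)).mp this
    · exact Or.inr (hUnsafe x hs)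
  have hc0 : 0 ≤ c := by rcases hc with h | h <;> simp [h]
  rw [PTR_apply Q lam x hp0 hp1 B hB hxfin, PTR_apply Q lam y hq0 hq1 B hB hyfin,
    ← hadef, ← hbdef, ← hcdef, ← ENNReal.ofReal_mul (exp_nonneg _),
    ← ENNReal.ofReal_add (mul_nonneg (exp_nonneg _)
      (by nlinarith : (0:ℝ) ≤ lam y * b + (1 - lam y) * c)) (by positivity)]
  apply ENNReal.ofReal_le_ofReal
  rw [exp_add]
  exact PTR_core (lam x) (lam y) a b c (exp ε₁) (exp ε₂) δ₁ δ₂ δ₃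
    hp0 hp1 hq0 hq1 ha0 ha1 hb0 hb1 hc he1 he2 hδ₁ hδ₂ hδ₃ ht1 ht2 hmain


end
end

section
/- Suppose a propose-test-release mechanism P based on release mechanism Q and test probability λ is (ε, δ)-differentially private. Then: (1) the test mechanism characterized by λ is itself (ε, δ)-differentially private; and (2) for any dataset ν̂ with λ(ν̂) > 1/k, the pair (Q, ν̂) is (2ε, kδe^ε)-safe. -/
open MeasureTheory Real

open scoped ENNReal

noncomputable section

variable {D Θ : Type*} [MeasurableSpace Θ]

lemma PTR_apply_inl (Q : D → Measure Θ) (lam : D → ℝ) (x : D) {B : Set Θ}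
    (hB : MeasurableSet B) :
    PTR Q lam x (Sum.inl '' B) = ENNReal.ofReal (lam x) * Q x B := by
  unfold PTR
  rw [Measure.add_apply, Measure.smul_apply, Measure.smul_apply,
    Measure.map_apply measurable_inl hB.inl_image,
    Measure.dirac_apply' _ hB.inl_image, Sum.inl_injective.preimage_image]
  simp [Set.indicator_of_notMem]

lemma PTR_apply_inr (Q : D → Measure Θ) (lam : D → ℝ) (x : D) :
    PTR Q lam x (Sum.inr '' (Set.univ : Set Unit)) = ENNReal.ofReal (1 - lam x) := by
  unfold PTR
  rw [Measure.add_apply, Measure.smul_apply, Measure.smul_apply,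
    Measure.map_apply measurable_inl (MeasurableSet.univ.inr_image),
    Measure.dirac_apply' _ (MeasurableSet.univ.inr_image)]
  have h : (Sum.inl ⁻¹' (Sum.inr '' (Set.univ : Set Unit)) : Set Θ) = ∅ := by
    ext a; simp
  rw [h]
  simp [Set.indicator_of_mem]

lemma testMech_apply (lam : D → ℝ) (x : D) (B : Set Bool) :
    testMech lam x B = ENNReal.ofReal (lam x) * B.indicator 1 true +
      ENNReal.ofReal (1 - lam x) * B.indicator 1 false := by
  unfold testMech
  rw [Measure.add_apply, Measure.smul_apply, Measure.smul_apply,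
    Measure.dirac_apply, Measure.dirac_apply]
  simp [smul_eq_mul]

lemma aux_toReal {a b : ℝ≥0∞} (hb : b ≠ ⊤) {c d E dl : ℝ}
    (hc : 0 ≤ c) (hd : 0 ≤ d) (hE : 0 ≤ E) (hdl : 0 ≤ dl)
    (h : ENNReal.ofReal c * a ≤ ENNReal.ofReal E * (ENNReal.ofReal d * b) + ENNReal.ofReal dl) :
    c * a.toReal ≤ E * (d * b.toReal) + dl := by
  have h1 : ENNReal.ofReal E * (ENNReal.ofReal d * b) ≠ ⊤ :=
    ENNReal.mul_ne_top ENNReal.ofReal_ne_top (ENNReal.mul_ne_top ENNReal.ofReal_ne_top hb)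
  have hfin : ENNReal.ofReal E * (ENNReal.ofReal d * b) + ENNReal.ofReal dl ≠ ⊤ :=
    ENNReal.add_ne_top.2 ⟨h1, ENNReal.ofReal_ne_top⟩
  have h2 := ENNReal.toReal_mono hfin h
  rw [ENNReal.toReal_add h1 ENNReal.ofReal_ne_top, ENNReal.toReal_mul, ENNReal.toReal_mul,
    ENNReal.toReal_mul, ENNReal.toReal_ofReal hc, ENNReal.toReal_ofReal hd,
    ENNReal.toReal_ofReal hE, ENNReal.toReal_ofReal hdl] at h2
  exact h2

lemma core1 {E dl l1 l2 u t : ℝ} (hE : 1 < E) (hd : 0 < dl) (hl1 : 0 < l1)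
    (hu : 0 ≤ u) (ht : 0 ≤ t) (ht1 : t ≤ 1)
    (r1 : l1 * u ≤ E * (l2 * t) + dl)
    (r4 : l2 * (1 - t) ≤ E * (l1 * (1 - u)) + dl) :
    l1 * u ≤ E * E * (l1 * t) + E * dl := by
  by_contra hcon
  push_neg at hcon
  have hE0 : (0:ℝ) < E := lt_trans one_pos hE
  have key : (E - 1) * dl < E * t * (l2 - E * l1) := by nlinarith [r1, hcon]
  have ht0 : 0 < t := by
    rcases ht.lt_or_eq with h | h
    · exact h
    · exfalso; rw [← h] at key; nlinarith
  have hl2' : E * l1 < l2 := by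
    by_contra h'
    push_neg at h'
    have h2 : E * t * (l2 - E * l1) ≤ 0 :=
      mul_nonpos_of_nonneg_of_nonpos (by positivity) (by linarith)
    nlinarith
  have h5 : E * l1 * (1 - t) ≤ E * (l1 * (1 - u)) + dl := by
    nlinarith [mul_le_mul_of_nonneg_right hl2'.le (by linarith : (0:ℝ) ≤ 1 - t), r4]
  have h6 : E * (E * E * (l1 * t) + E * dl) < E * (l1 * u) :=
    mul_lt_mul_of_pos_left hcon hE0
  have hA : (0:ℝ) ≤ E * l1 * t := mul_nonneg (mul_nonneg hE0.le hl1.le) ht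
  have hEE : (0:ℝ) < E * E - 1 := by nlinarith
  have hApd : (0:ℝ) < E * l1 * t + dl := by linarith
  nlinarith [h5, h6, mul_pos hEE hApd]

lemma core2 {E dl l1 l2 u t : ℝ} (hE : 1 < E) (hd : 0 < dl) (hl1 : 0 < l1)
    (hu : 0 ≤ u) (ht : 0 ≤ t) (ht1 : t ≤ 1)
    (r2 : l2 * t ≤ E * (l1 * u) + dl)
    (r3 : l1 * (1 - u) ≤ E * (l2 * (1 - t)) + dl) :
    l1 * t ≤ E * E * (l1 * u) + E * dl := by
  by_contra hcon
  push_neg at hcon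
  have hE0 : (0:ℝ) < E := lt_trans one_pos hE
  have ht0 : 0 < t := by
    nlinarith [mul_nonneg (mul_nonneg (mul_nonneg hE0.le hE0.le) hl1.le) hu,
      mul_pos hE0 hd]
  have hl2' : E * l2 < l1 := by
    have h6 : E * (l2 * t) ≤ E * (E * (l1 * u) + dl) := mul_le_mul_of_nonneg_left r2 hE0.le
    by_contra h'
    push_neg at h'
    nlinarith [mul_le_mul_of_nonneg_right h' ht]
  have h7 : E * (l2 * (1 - t)) ≤ l1 * (1 - t) := by
    nlinarith [mul_le_mul_of_nonneg_right hl2'.le (by linarith : (0:ℝ) ≤ 1 - t)]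
  have hEE : (0:ℝ) ≤ E * E - 1 := by nlinarith
  nlinarith [r3, h7, mul_nonneg hEE (mul_nonneg hl1.le hu), mul_pos hE0 hd]

/-- If a PTR mechanism based on `(Q, lam)` is `(ε, δ)`-differentially private, then (1) the
test mechanism characterized by `lam` is `(ε, δ)`-differentially private, and (2) for any
dataset `x` with `lam x > 1/k`, the pair `(Q, x)` is `(2ε, kδe^ε)`-safe. -/
theorem PTR_DP_necessary (Adj : D → D → Prop) (hAdj : Symmetric Adj)
    (Q : D → Measure Θ) [∀ x, IsProbabilityMeasure (Q x)]
    (lam : D → ℝ) (hlam : ∀ x, 0 ≤ lam x ∧ lam x ≤ 1)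
    (ε δ : ℝ) (hε : 0 < ε) (hδ : 0 < δ)
    (hPTR : IsDP Adj (PTR Q lam) ε δ) :
    IsDP Adj (testMech lam) ε δ ∧
    ∀ (x : D) (k : ℝ), 0 < k → 1 / k < lam x →
      IsSafe Adj Q (2 * ε) (k * δ * exp ε) x := by
  have hE1 : 1 < exp ε := by
    have := Real.exp_lt_exp.2 hε
    rwa [Real.exp_zero] at this
  have hE0 : (0:ℝ) < exp ε := Real.exp_pos ε
  -- real inequalities for the test probabilities
  have hT1 : ∀ x y, Adj x y → lam x ≤ exp ε * lam y + δ := by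
    intro x y hxy
    have h := hPTR x y hxy (Sum.inl '' Set.univ) (MeasurableSet.univ.inl_image)
    rw [PTR_apply_inl Q lam x MeasurableSet.univ, PTR_apply_inl Q lam y MeasurableSet.univ,
      measure_univ, measure_univ, mul_one, mul_one, ← ENNReal.ofReal_mul hE0.le,
      ← ENNReal.ofReal_add (mul_nonneg hE0.le (hlam y).1) hδ.le] at h
    exact (ENNReal.ofReal_le_ofReal_iff
      (by linarith [mul_nonneg hE0.le (hlam y).1])).1 h
  have hT2 : ∀ x y, Adj x y → 1 - lam x ≤ exp ε * (1 - lam y) + δ := by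
    intro x y hxy
    have h := hPTR x y hxy (Sum.inr '' Set.univ) (MeasurableSet.univ.inr_image)
    have h2y : (0:ℝ) ≤ 1 - lam y := by linarith [(hlam y).2]
    rw [PTR_apply_inr Q lam x, PTR_apply_inr Q lam y, ← ENNReal.ofReal_mul hE0.le,
      ← ENNReal.ofReal_add (mul_nonneg hE0.le h2y) hδ.le] at h
    exact (ENNReal.ofReal_le_ofReal_iff
      (by linarith [mul_nonneg hE0.le h2y])).1 h
  constructor
  · -- the test mechanism is DP
    intro x y hxy B _
    rw [testMech_apply, testMech_apply]
    have e1 : ENNReal.ofReal (lam x) ≤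
        ENNReal.ofReal (exp ε) * ENNReal.ofReal (lam y) + ENNReal.ofReal δ := by
      calc ENNReal.ofReal (lam x) ≤ ENNReal.ofReal (exp ε * lam y + δ) :=
            ENNReal.ofReal_le_ofReal (hT1 x y hxy)
        _ = _ := by
            rw [ENNReal.ofReal_add (mul_nonneg hE0.le (hlam y).1) hδ.le,
              ENNReal.ofReal_mul hE0.le]
    have e2 : ENNReal.ofReal (1 - lam x) ≤
        ENNReal.ofReal (exp ε) * ENNReal.ofReal (1 - lam y) + ENNReal.ofReal δ := by
      have h2y : (0:ℝ) ≤ 1 - lam y := by linarith [(hlam y).2]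
      calc ENNReal.ofReal (1 - lam x) ≤ ENNReal.ofReal (exp ε * (1 - lam y) + δ) :=
            ENNReal.ofReal_le_ofReal (hT2 x y hxy)
        _ = _ := by
            rw [ENNReal.ofReal_add (mul_nonneg hE0.le h2y) hδ.le,
              ENNReal.ofReal_mul hE0.le]
    by_cases ht : true ∈ B
    · by_cases hf : false ∈ B
      · rw [Set.indicator_of_mem ht, Set.indicator_of_mem hf]
        simp only [Pi.one_apply, mul_one]
        have hsx : lam x + (1 - lam x) = 1 := by ring
        have hsy : lam y + (1 - lam y) = 1 := by ring
        rw [← ENNReal.ofReal_add (hlam x).1 (by linarith [(hlam x).2]),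
          ← ENNReal.ofReal_add (hlam y).1 (by linarith [(hlam y).2]), hsx, hsy,
          ENNReal.ofReal_one, mul_one]
        exact le_trans (ENNReal.one_le_ofReal.2 hE1.le) le_self_add
      · rw [Set.indicator_of_mem ht, Set.indicator_of_notMem hf]
        simp only [Pi.one_apply, mul_one, mul_zero, add_zero]
        exact e1
    · by_cases hf : false ∈ B
      · rw [Set.indicator_of_notMem ht, Set.indicator_of_mem hf]
        simp only [Pi.one_apply, mul_one, mul_zero, zero_add]
        exact e2
      · rw [Set.indicator_of_notMem ht, Set.indicator_of_notMem hf]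
        simp
  · -- safety
    intro x k hk hkl y hxy B hB
    have hl1 : 0 < lam x := lt_trans (by positivity) hkl
    have hkl1 : 1 < lam x * k := by rwa [div_lt_iff₀ hk] at hkl
    have hA := hPTR x y hxy (Sum.inl '' B) hB.inl_image
    have hB' := hPTR y x (hAdj hxy) (Sum.inl '' B) hB.inl_image
    have hC := hPTR x y hxy (Sum.inl '' Bᶜ) hB.compl.inl_image
    have hD := hPTR y x (hAdj hxy) (Sum.inl '' Bᶜ) hB.compl.inl_image
    rw [PTR_apply_inl Q lam x hB, PTR_apply_inl Q lam y hB] at hA hB'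
    rw [PTR_apply_inl Q lam x hB.compl, PTR_apply_inl Q lam y hB.compl] at hC hD
    have r1 := aux_toReal (measure_ne_top _ _) (hlam x).1 (hlam y).1 hE0.le hδ.le hA
    have r2 := aux_toReal (measure_ne_top _ _) (hlam y).1 (hlam x).1 hE0.le hδ.le hB'
    have r3 := aux_toReal (measure_ne_top _ _) (hlam x).1 (hlam y).1 hE0.le hδ.le hC
    have r4 := aux_toReal (measure_ne_top _ _) (hlam y).1 (hlam x).1 hE0.le hδ.le hD
    have hcx : (Q x Bᶜ).toReal = 1 - (Q x B).toReal := by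
      rw [measure_compl hB (measure_ne_top _ _), measure_univ,
        ENNReal.toReal_sub_of_le prob_le_one (by simp), ENNReal.toReal_one]
    have hcy : (Q y Bᶜ).toReal = 1 - (Q y B).toReal := by
      rw [measure_compl hB (measure_ne_top _ _), measure_univ,
        ENNReal.toReal_sub_of_le prob_le_one (by simp), ENNReal.toReal_one]
    rw [hcx, hcy] at r3 r4
    have hu : 0 ≤ (Q x B).toReal := ENNReal.toReal_nonneg
    have ht : 0 ≤ (Q y B).toReal := ENNReal.toReal_nonneg
    have ht1 : (Q y B).toReal ≤ 1 := by
      have h := ENNReal.toReal_mono (by simp) (prob_le_one (μ := Q y) (s := B))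
      simpa using h
    have hu1 : (Q x B).toReal ≤ 1 := by
      have h := ENNReal.toReal_mono (by simp) (prob_le_one (μ := Q x) (s := B))
      simpa using h
    have c1 := core1 hE1 hδ hl1 hu ht ht1 r1 r4
    have c2 := core2 hE1 hδ hl1 hu ht ht1 r2 r3
    have hexp2 : exp (2 * ε) = exp ε * exp ε := by rw [two_mul, Real.exp_add]
    have hkδE : 0 < k * δ * exp ε := by positivity
    have hprod : (0:ℝ) < δ * exp ε * (lam x * k - 1) :=
      mul_pos (mul_pos hδ hE0) (by linarith)
    have g1 : (Q x B).toReal ≤ exp (2 * ε) * (Q y B).toReal + k * δ * exp ε := by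
      rw [hexp2]
      nlinarith [c1, hprod, hl1, mul_nonneg (mul_nonneg hE0.le hE0.le) ht]
    have g2 : (Q y B).toReal ≤ exp (2 * ε) * (Q x B).toReal + k * δ * exp ε := by
      rw [hexp2]
      nlinarith [c2, hprod, hl1, mul_nonneg (mul_nonneg hE0.le hE0.le) hu]
    have hx : Q x B = ENNReal.ofReal (Q x B).toReal := (ENNReal.ofReal_toReal (measure_ne_top _ _)).symm
    have hy : Q y B = ENNReal.ofReal (Q y B).toReal := (ENNReal.ofReal_toReal (measure_ne_top _ _)).symm
    constructor
    · rw [hx, hy, ← ENNReal.ofReal_mul (exp_nonneg _),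
        ← ENNReal.ofReal_add (mul_nonneg (exp_nonneg _) ht)
          (mul_nonneg (mul_nonneg hk.le hδ.le) (exp_nonneg _))]
      exact ENNReal.ofReal_le_ofReal g1
    · rw [hx, hy, ← ENNReal.ofReal_mul (exp_nonneg _),
        ← ENNReal.ofReal_add (mul_nonneg (exp_nonneg _) hu)
          (mul_nonneg (mul_nonneg hk.le hδ.le) (exp_nonneg _))]
      exact ENNReal.ofReal_le_ofReal g2

end
end

section
/- Fix ε, τ > 0, 0 < η ≤ τ, and 0 < δ ≤ e^{-ε/2}/2. Let φ(·, ν) be a cost function and let EM_ν be the measure with density proportional to 1{φ(x,ν) ≤ τ} exp(-φ(x,ν)ε/(4η)) dx. Suppose: (i) sup over ν̃ adjacent to ν̂ and x with φ(x,ν̂) ≤ τ or φ(x,ν̃) ≤ τ of |φ(x,ν̂) - φ(x,ν̃)| ≤ η, and (ii) h(A_{τ-η,ν̂}, ν̂)/h(A_{τ+η,ν̂}, ν̂) ≥ 1 - e^{-ε/2}δ/3, where h(A, ν) = ∫_A exp(-φ(x,ν)ε/(4η))dx and A_{t,ν} = {x : φ(x,ν) ≤ t}. Then for all ν̃ adjacent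 to ν̂ and all measurable E: EM_ν̂(E) ≤ (e^{ε/2} + 2δ/3) EM_ν̃(E) + δ/3 and EM_ν̃(E) ≤ (e^{ε/2} + 2δ/3) EM_ν̂(E) + δ/3; in particular (EM, ν̂) is (ε/2, δ)-safe. -/
/-!
Both mechanisms are normalised restrictions of the Gibbs measures `μ_ν = e^{-βφ(·,ν)} dx`,
`β = ε/(4η)`, to their `τ`-level sets `P = A_{τ,ν̂}` and `Q = A_{τ,ν̃}`. On `P ∪ Q` the two costs
differ by at most `η`, so the two Gibbs measures agree there up to the factor `c = e^{ε/4}`.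
By the same insensitivity `K = A_{τ-η,ν̂} ⊆ P ∩ Q` and `P ∪ Q ⊆ L = A_{τ+η,ν̂}`, and condition (ii)
says that `μ_ν̂` gives mass at most `x μ_ν̂(L)` to `L \ K`, where `x = e^{-ε/2}δ/3`. Hence each
mechanism puts mass at most `x` (resp. `c²x = δ/3`) outside the support of the other, while the
normalising constants differ by at most the factor `c/(1-x)`; and `c²/(1-x) ≤ e^{ε/2} + 2δ/3`.
The `(ε/2, δ)` bounds follow because both mechanisms are at most `1`.
-/

open MeasureTheory Real

noncomputable section

variable {d : ℕ} {D : Type*}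

/-- `h(A, ν) = ∫_A exp(-φ(x, ν) ε/(4η)) dx` with respect to Lebesgue measure on `ℝ^d`. -/
def hInt (φ : EuclideanSpace ℝ (Fin d) → ℝ) (β : ℝ) (A : Set (EuclideanSpace ℝ (Fin d))) :
    ENNReal :=
  ∫⁻ x in A, ENNReal.ofReal (exp (-(φ x) * β))

/-- The `t`-level set `A_{t,ν} = {x : φ(x, ν) ≤ t}`. -/
def Aset (φ : D → EuclideanSpace ℝ (Fin d) → ℝ) (ν : D) (t : ℝ) :
    Set (EuclideanSpace ℝ (Fin d)) := {x | φ ν x ≤ t}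

/-- The (truncated) exponential mechanism applied to the cost `φ(·, ν)`:
`EM_ν(B) = h(B ∩ A_{τ,ν}, ν) / h(A_{τ,ν}, ν)`. -/
def EMech (φ : D → EuclideanSpace ℝ (Fin d) → ℝ) (τ η ε : ℝ) (ν : D)
    (B : Set (EuclideanSpace ℝ (Fin d))) : ENNReal :=
  hInt (φ ν) (ε / (4 * η)) (B ∩ Aset φ ν τ) / hInt (φ ν) (ε / (4 * η)) (Aset φ ν τ)

open Set
open scoped ENNReal

section Comparison

variable {α : Type*} [MeasurableSpace α] {μ ν : Measure α}

lemma div_measure_le_of_forall_le_mul {S T : Set α} {a b c : ℝ≥0∞} (E : Set α)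
    (hT₀ : ν T ≠ 0) (hT : ν T ≠ ∞) (hμν : ∀ B ⊆ S, μ B ≤ c * ν B)
    (hout : μ (S \ T) ≤ a * μ S) (hνμ : ν T ≤ b * μ S) :
    μ (E ∩ S) / μ S ≤ c * b * (ν (E ∩ T) / ν T) + a := by
  refine ENNReal.div_le_of_le_mul ?_
  set r := ν (E ∩ T) / ν T
  calc μ (E ∩ S) ≤ μ (E ∩ S ∩ T) + μ ((E ∩ S) \ T) := measure_le_inter_add_sdiff μ _ _
    _ ≤ c * ν (E ∩ T) + a * μ S := by
        refine add_le_add ((hμν _ fun y hy => hy.1.2).trans ?_)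
          ((measure_mono (sdiff_subset_sdiff_left inter_subset_right)).trans hout)
        gcongr
        exact inter_subset_left
    _ = c * (r * ν T) + a * μ S := by rw [ENNReal.div_mul_cancel hT₀ hT]
    _ ≤ c * (r * (b * μ S)) + a * μ S := by gcongr
    _ = (c * b * r + a) * μ S := by ring

lemma measure_sdiff_le_mul_of_one_sub_mul_le {K R L : Set α} {X : ℝ≥0∞} (hK : MeasurableSet K)
    (hKR : K ⊆ R) (hRL : R ⊆ L) (hKfin : μ K ≠ ∞) (hL : (1 - X) * μ L ≤ μ K) :
    μ (R \ K) ≤ X * μ R := by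
  refine ENNReal.le_of_add_le_add_right hKfin ?_
  calc μ (R \ K) + μ K = μ R := by
        rw [← measure_sdiff_add_inter R hK, inter_eq_right.mpr hKR]
    _ ≤ (X + (1 - X)) * μ R := le_mul_of_one_le_left' le_add_tsub
    _ = X * μ R + (1 - X) * μ R := add_mul _ _ _
    _ ≤ X * μ R + μ K := by gcongr; exact (by gcongr : (1 - X) * μ R ≤ (1 - X) * μ L).trans hL

theorem div_measure_le_two_sided {K P Q L : Set α} {c X : ℝ≥0∞} (hK : MeasurableSet K)
    (hKP : K ⊆ P) (hKQ : K ⊆ Q) (hPL : P ⊆ L) (hQL : Q ⊆ L) (hX : X < 1)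
    (hL : (1 - X) * μ L ≤ μ K) (hLfin : μ L ≠ ∞)
    (hμν : ∀ B ⊆ P ∪ Q, μ B ≤ c * ν B) (hνμ : ∀ B ⊆ P ∪ Q, ν B ≤ c * μ B)
    (hc : c ≠ ∞) (hP₀ : μ P ≠ 0) (hQ₀ : ν Q ≠ 0) (E : Set α) :
    μ (E ∩ P) / μ P ≤ c * (c * (1 - X)⁻¹) * (ν (E ∩ Q) / ν Q) + X ∧
      ν (E ∩ Q) / ν Q ≤ c * (c * (1 - X)⁻¹) * (μ (E ∩ P) / μ P) + c * c * X := by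
  have hKfin : μ K ≠ ∞ := measure_ne_top_of_subset (hKP.trans hPL) hLfin
  have hLK : μ L ≤ (1 - X)⁻¹ * μ K :=
    (ENNReal.mul_le_iff_le_inv (tsub_pos_of_lt hX).ne'
      (ne_top_of_le_ne_top ENNReal.one_ne_top tsub_le_self)).1 hL
  have hQfin : ν Q ≠ ∞ := ne_top_of_le_ne_top (ENNReal.mul_ne_top hc hLfin)
    ((hνμ Q subset_union_right).trans (by gcongr))
  constructor
  · refine div_measure_le_of_forall_le_mul E hQ₀ hQfin
      (fun B hB => hμν B (hB.trans subset_union_left)) ?_ ?_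
    · calc μ (P \ Q) ≤ μ (P \ K) := measure_mono (sdiff_subset_sdiff_right hKQ)
        _ ≤ X * μ P := measure_sdiff_le_mul_of_one_sub_mul_le hK hKP hPL hKfin hL
    · calc ν Q ≤ c * μ L := (hνμ Q subset_union_right).trans (by gcongr)
        _ ≤ c * ((1 - X)⁻¹ * μ P) := by gcongr; exact hLK.trans (by gcongr)
        _ = c * (1 - X)⁻¹ * μ P := (mul_assoc _ _ _).symm
  · refine div_measure_le_of_forall_le_mul E hP₀ (measure_ne_top_of_subset hPL hLfin)
      (fun B hB => hνμ B (hB.trans subset_union_right)) ?_ ?_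
    · -- `Q \ P` is the part of `K ∪ Q \ P ⊆ L` lying outside `K`.
      have hR : K ∪ Q \ P ⊆ P ∪ Q :=
        union_subset (hKP.trans subset_union_left) (sdiff_subset.trans subset_union_right)
      have hQP : (K ∪ Q \ P) \ K = Q \ P := by
        rw [union_sdiff_left]; exact sdiff_eq_left.mpr (disjoint_sdiff_left.mono_right hKP)
      calc ν (Q \ P) ≤ c * μ ((K ∪ Q \ P) \ K) := by
            rw [hQP]; exact hνμ _ (sdiff_subset.trans subset_union_right)
        _ ≤ c * (X * μ (K ∪ Q \ P)) := by
            gcongr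
            exact measure_sdiff_le_mul_of_one_sub_mul_le hK subset_union_left
              (union_subset (hKP.trans hPL) (sdiff_subset.trans hQL)) hKfin hL
        _ ≤ c * (X * (c * ν Q)) := by
            gcongr
            exact (hμν _ hR).trans (by gcongr; exact union_subset hKQ sdiff_subset)
        _ = c * c * X * ν Q := by ring
    · calc μ P ≤ (1 - X)⁻¹ * μ K := (measure_mono hPL).trans hLK
        _ ≤ (1 - X)⁻¹ * (c * ν Q) := by
            gcongr
            exact (hμν K (hKP.trans subset_union_left)).trans (by gcongr)
        _ = c * (1 - X)⁻¹ * ν Q := by ring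

end Comparison

section Gibbs

variable {α : Type*} [MeasurableSpace α]

def gibbsMeasure (μ : Measure α) (f : α → ℝ) (β : ℝ) : Measure α :=
  μ.withDensity fun x => ENNReal.ofReal (exp (-(f x) * β))

lemma gibbsMeasure_le_exp_mul {μ : Measure α} [SFinite μ] {f g : α → ℝ} {β η : ℝ} {U B : Set α}
    (hβ : 0 ≤ β) (hU : MeasurableSet U) (hfg : ∀ x ∈ U, |f x - g x| ≤ η) (hB : B ⊆ U) :
    gibbsMeasure μ f β B ≤ ENNReal.ofReal (exp (η * β)) * gibbsMeasure μ g β B := by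
  rw [gibbsMeasure, gibbsMeasure, withDensity_apply', withDensity_apply',
    ← lintegral_const_mul' _ _ ENNReal.ofReal_ne_top]
  refine lintegral_mono_ae ((ae_restrict_of_ae_restrict_of_subset hB (ae_restrict_mem hU)).mono
    fun x hx => ?_)
  rw [← ENNReal.ofReal_mul (exp_pos _).le, ← exp_add]
  gcongr
  nlinarith [(abs_le.mp (hfg x hx)).1]

end Gibbs

lemma hInt_eq_gibbsMeasure (f : EuclideanSpace ℝ (Fin d) → ℝ) (β : ℝ)
    (A : Set (EuclideanSpace ℝ (Fin d))) : hInt f β A = gibbsMeasure volume f β A :=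
  (withDensity_apply' _ A).symm

section LevelSets

variable {φ : D → EuclideanSpace ℝ (Fin d) → ℝ}

lemma Aset_mono (ν : D) {s t : ℝ} (h : s ≤ t) : Aset φ ν s ⊆ Aset φ ν t :=
  fun _ hx => le_trans hx h

lemma measurableSet_Aset {ν : D} (hφ : Measurable (φ ν)) (t : ℝ) :
    MeasurableSet (Aset φ ν t) :=
  hφ measurableSet_Iic

variable {ν₁ ν₂ : D} {τ η : ℝ}

lemma Aset_sub_subset (hη : 0 ≤ η)
    (hclose : ∀ x, (φ ν₁ x ≤ τ ∨ φ ν₂ x ≤ τ) → |φ ν₁ x - φ ν₂ x| ≤ η) :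
    Aset φ ν₁ (τ - η) ⊆ Aset φ ν₂ τ := fun x (hx : φ ν₁ x ≤ τ - η) => by
  have := (abs_le.mp (hclose x (Or.inl (by linarith)))).1
  show φ ν₂ x ≤ τ
  linarith

lemma Aset_subset_add (hclose : ∀ x, (φ ν₁ x ≤ τ ∨ φ ν₂ x ≤ τ) → |φ ν₁ x - φ ν₂ x| ≤ η) :
    Aset φ ν₂ τ ⊆ Aset φ ν₁ (τ + η) := fun x (hx : φ ν₂ x ≤ τ) => by
  have := (abs_le.mp (hclose x (Or.inr hx))).2
  show φ ν₁ x ≤ τ + η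
  linarith

end LevelSets

lemma EMech_eq (φ : D → EuclideanSpace ℝ (Fin d) → ℝ) (τ η ε : ℝ) (ν : D)
    (B : Set (EuclideanSpace ℝ (Fin d))) :
    EMech φ τ η ε ν B = gibbsMeasure volume (φ ν) (ε / (4 * η)) (B ∩ Aset φ ν τ) /
      gibbsMeasure volume (φ ν) (ε / (4 * η)) (Aset φ ν τ) := by
  simp only [EMech, hInt_eq_gibbsMeasure]

lemma EMech_le_one (φ : D → EuclideanSpace ℝ (Fin d) → ℝ) (τ η ε : ℝ)
    (ν : D) (B : Set (EuclideanSpace ℝ (Fin d))) : EMech φ τ η ε ν B ≤ 1 := by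
  rw [EMech_eq]
  exact ENNReal.div_le_of_le_mul (by rw [one_mul]; exact measure_mono inter_subset_right)

theorem EMech_le_two_sided {φ : D → EuclideanSpace ℝ (Fin d) → ℝ} (hφ : ∀ ν, Measurable (φ ν))
    {ν₁ ν₂ : D} {τ η ε x : ℝ} (hε : 0 ≤ ε) (hη : 0 < η) (hx₀ : 0 ≤ x) (hx : x < 1)
    (hclose : ∀ y, (φ ν₁ y ≤ τ ∨ φ ν₂ y ≤ τ) → |φ ν₁ y - φ ν₂ y| ≤ η)
    (hP₀ : hInt (φ ν₁) (ε / (4 * η)) (Aset φ ν₁ τ) ≠ 0)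
    (hQ₀ : hInt (φ ν₂) (ε / (4 * η)) (Aset φ ν₂ τ) ≠ 0)
    (hL : ENNReal.ofReal (1 - x) * hInt (φ ν₁) (ε / (4 * η)) (Aset φ ν₁ (τ + η)) ≤
      hInt (φ ν₁) (ε / (4 * η)) (Aset φ ν₁ (τ - η)))
    (hLfin : hInt (φ ν₁) (ε / (4 * η)) (Aset φ ν₁ (τ + η)) ≠ ∞)
    (E : Set (EuclideanSpace ℝ (Fin d))) :
    EMech φ τ η ε ν₁ E ≤ ENNReal.ofReal (exp (ε / 4)) * (ENNReal.ofReal (exp (ε / 4)) *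
        (1 - ENNReal.ofReal x)⁻¹) * EMech φ τ η ε ν₂ E + ENNReal.ofReal x ∧
      EMech φ τ η ε ν₂ E ≤ ENNReal.ofReal (exp (ε / 4)) * (ENNReal.ofReal (exp (ε / 4)) *
        (1 - ENNReal.ofReal x)⁻¹) * EMech φ τ η ε ν₁ E +
        ENNReal.ofReal (exp (ε / 4)) * ENNReal.ofReal (exp (ε / 4)) * ENNReal.ofReal x := by
  simp only [hInt_eq_gibbsMeasure] at hP₀ hQ₀ hL hLfin
  simp only [EMech_eq]
  have hβ : 0 ≤ ε / (4 * η) := by positivity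
  have hηβ : exp (η * (ε / (4 * η))) = exp (ε / 4) := by congr 1; field_simp
  have hU : MeasurableSet (Aset φ ν₁ τ ∪ Aset φ ν₂ τ) :=
    (measurableSet_Aset (hφ _) τ).union (measurableSet_Aset (hφ _) τ)
  exact div_measure_le_two_sided (measurableSet_Aset (hφ ν₁) (τ - η))
    (Aset_mono ν₁ (by linarith)) (Aset_sub_subset hη.le hclose) (Aset_mono ν₁ (by linarith))
    (Aset_subset_add hclose) (ENNReal.ofReal_lt_one.2 hx)
    (by rwa [← ENNReal.ofReal_one, ← ENNReal.ofReal_sub _ hx₀]) hLfin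
    (fun B hB => hηβ ▸ gibbsMeasure_le_exp_mul hβ hU hclose hB)
    (fun B hB => hηβ ▸ gibbsMeasure_le_exp_mul hβ hU
      (fun y hy => (abs_sub_comm _ _).trans_le (hclose y hy)) hB)
    ENNReal.ofReal_ne_top hP₀ hQ₀ E

lemma exp_half_div_one_sub_le {ε δ : ℝ} (hε : 0 ≤ ε) (hδ₀ : 0 ≤ δ)
    (hδ : δ ≤ exp (-(ε / 2)) / 2) :
    exp (ε / 2) / (1 - exp (-(ε / 2)) * δ / 3) ≤ exp (ε / 2) + 2 * δ / 3 := by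
  have hu₁ : exp (-(ε / 2)) ≤ 1 := exp_le_one_iff.2 (by linarith)
  have hu : exp (ε / 2) * exp (-(ε / 2)) = 1 := by rw [← exp_add, add_neg_cancel, exp_zero]
  have hx : exp (-(ε / 2)) * δ ≤ 1 / 2 := by nlinarith [exp_pos (-(ε / 2))]
  rw [div_le_iff₀ (by linarith)]
  nlinarith [mul_nonneg hδ₀ (by linarith : (0 : ℝ) ≤ 1 / 2 - exp (-(ε / 2)) * δ)]

lemma ofReal_exp_quarter_mul_self (ε : ℝ) :
    ENNReal.ofReal (exp (ε / 4)) * ENNReal.ofReal (exp (ε / 4)) = ENNReal.ofReal (exp (ε / 2)) := by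
  rw [← ENNReal.ofReal_mul (exp_pos _).le, ← exp_add]
  ring_nf

lemma ofReal_exp_quarter_mul_inv_one_sub_le {ε δ : ℝ} (hε : 0 ≤ ε) (hδ₀ : 0 ≤ δ)
    (hδ : δ ≤ exp (-(ε / 2)) / 2) :
    ENNReal.ofReal (exp (ε / 4)) * (ENNReal.ofReal (exp (ε / 4)) *
      (1 - ENNReal.ofReal (exp (-(ε / 2)) * δ / 3))⁻¹) ≤
        ENNReal.ofReal (exp (ε / 2) + 2 * δ / 3) := by
  have hx : exp (-(ε / 2)) * δ / 3 < 1 := by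
    nlinarith [exp_pos (-(ε / 2)), exp_le_one_iff.2 (by linarith : -(ε / 2) ≤ 0)]
  rw [← mul_assoc, ofReal_exp_quarter_mul_self, ← ENNReal.ofReal_one,
    ← ENNReal.ofReal_sub _ (by positivity), ← ENNReal.ofReal_inv_of_pos (by linarith),
    ← ENNReal.ofReal_mul (exp_pos _).le, ← div_eq_mul_inv]
  exact ENNReal.ofReal_le_ofReal (exp_half_div_one_sub_le hε hδ₀ hδ)

lemma ofReal_exp_quarter_mul_self_mul (ε δ : ℝ) :
    ENNReal.ofReal (exp (ε / 4)) * ENNReal.ofReal (exp (ε / 4)) *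
      ENNReal.ofReal (exp (-(ε / 2)) * δ / 3) = ENNReal.ofReal (δ / 3) := by
  rw [ofReal_exp_quarter_mul_self, ← ENNReal.ofReal_mul (exp_pos _).le, ← mul_div_assoc,
    ← mul_assoc, ← exp_add, add_neg_cancel, exp_zero, one_mul]

lemma le_ofReal_mul_add_ofReal_of_le {A M : ℝ≥0∞} {a δ : ℝ} (ha : 0 ≤ a) (hδ : 0 ≤ δ)
    (hM : M ≤ 1) (h : A ≤ ENNReal.ofReal (a + 2 * δ / 3) * M + ENNReal.ofReal (δ / 3)) :
    A ≤ ENNReal.ofReal a * M + ENNReal.ofReal δ := by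
  refine h.trans ?_
  rw [ENNReal.ofReal_add ha (by positivity), add_mul, add_assoc]
  gcongr
  calc ENNReal.ofReal (2 * δ / 3) * M + ENNReal.ofReal (δ / 3)
      ≤ ENNReal.ofReal (2 * δ / 3) + ENNReal.ofReal (δ / 3) := by
        gcongr; exact mul_le_of_le_one_right' hM
    _ = ENNReal.ofReal δ := by
        rw [← ENNReal.ofReal_add (by positivity) (by positivity)]; ring_nf

theorem EMech_safe_general
    (Adj : D → D → Prop)
    (φ : D → EuclideanSpace ℝ (Fin d) → ℝ) (hφmeas : ∀ ν, Measurable (φ ν))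
    (ε η τ δ : ℝ) (hε : 0 < ε) (hη : 0 < η)
    (hδ0 : 0 < δ) (hδ : δ ≤ exp (-(ε / 2)) / 2)
    (νhat : D)
    (hfin : ∀ ν', (ν' = νhat ∨ Adj νhat ν') →
      0 < hInt (φ ν') (ε / (4 * η)) (Aset φ ν' τ) ∧
      hInt (φ ν') (ε / (4 * η)) (Aset φ ν' (τ + η)) < ⊤)
    (hyp1 : ∀ ν', Adj νhat ν' → ∀ x, (φ νhat x ≤ τ ∨ φ ν' x ≤ τ) →
      |φ νhat x - φ ν' x| ≤ η)
    (hyp2 : ENNReal.ofReal (1 - exp (-(ε / 2)) * δ / 3) *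
        hInt (φ νhat) (ε / (4 * η)) (Aset φ νhat (τ + η)) ≤
      hInt (φ νhat) (ε / (4 * η)) (Aset φ νhat (τ - η))) :
    ∀ ν', Adj νhat ν' → ∀ E : Set (EuclideanSpace ℝ (Fin d)), MeasurableSet E →
      (EMech φ τ η ε νhat E ≤
          ENNReal.ofReal (exp (ε / 2) + 2 * δ / 3) * EMech φ τ η ε ν' E +
            ENNReal.ofReal (δ / 3) ∧
        EMech φ τ η ε ν' E ≤
          ENNReal.ofReal (exp (ε / 2) + 2 * δ / 3) * EMech φ τ η ε νhat E +
            ENNReal.ofReal (δ / 3)) ∧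
      (EMech φ τ η ε νhat E ≤
          ENNReal.ofReal (exp (ε / 2)) * EMech φ τ η ε ν' E + ENNReal.ofReal δ ∧
        EMech φ τ η ε ν' E ≤
          ENNReal.ofReal (exp (ε / 2)) * EMech φ τ η ε νhat E + ENNReal.ofReal δ) := by
  intro ν' hadj E _
  have hu : exp (-(ε / 2)) ≤ 1 := exp_le_one_iff.2 (by linarith)
  have hx : exp (-(ε / 2)) * δ / 3 ≤ δ / 3 := by gcongr; exact mul_le_of_le_one_left hδ0.le hu
  obtain ⟨hP₀, hLfin⟩ := hfin νhat (Or.inl rfl)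
  obtain ⟨h₁, h₂⟩ := EMech_le_two_sided hφmeas hε.le hη (by positivity) (by linarith)
    (hyp1 ν' hadj) hP₀.ne' (hfin ν' (Or.inr hadj)).1.ne' hyp2 hLfin.ne E
  rw [ofReal_exp_quarter_mul_self_mul] at h₂
  have hC := ofReal_exp_quarter_mul_inv_one_sub_le hε.le hδ0.le hδ
  have key₁ : EMech φ τ η ε νhat E ≤ ENNReal.ofReal (exp (ε / 2) + 2 * δ / 3) *
      EMech φ τ η ε ν' E + ENNReal.ofReal (δ / 3) :=
    h₁.trans (by gcongr)
  have key₂ : EMech φ τ η ε ν' E ≤ ENNReal.ofReal (exp (ε / 2) + 2 * δ / 3) *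
      EMech φ τ η ε νhat E + ENNReal.ofReal (δ / 3) :=
    h₂.trans (by gcongr)
  exact ⟨⟨key₁, key₂⟩,
    le_ofReal_mul_add_ofReal_of_le (exp_pos _).le hδ0.le (EMech_le_one ..) key₁,
    le_ofReal_mul_add_ofReal_of_le (exp_pos _).le hδ0.le (EMech_le_one ..) key₂⟩

/-- Safety of the exponential mechanism: under the local insensitivity condition (i) and
the level-contour mass condition (ii), for every adjacent `ν̃` and every measurable `E`,
`EM_ν̂(E) ≤ (e^{ε/2} + 2δ/3) EM_ν̃(E) + δ/3` and symmetrically; in particular `(EM, ν̂)` is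
`(ε/2, δ)`-safe. -/
theorem EMech_safe
    (Adj : D → D → Prop)
    (φ : D → EuclideanSpace ℝ (Fin d) → ℝ) (hφmeas : ∀ ν, Measurable (φ ν))
    (ε η τ δ : ℝ) (hε : 0 < ε) (hη : 0 < η) (hητ : η ≤ τ)
    (hδ0 : 0 < δ) (hδ : δ ≤ exp (-(ε / 2)) / 2)
    (νhat : D)
    (hfin : ∀ ν', (ν' = νhat ∨ Adj νhat ν') →
      0 < hInt (φ ν') (ε / (4 * η)) (Aset φ ν' τ) ∧
      hInt (φ ν') (ε / (4 * η)) (Aset φ ν' (τ + η)) < ⊤)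
    (hyp1 : ∀ ν', Adj νhat ν' → ∀ x, (φ νhat x ≤ τ ∨ φ ν' x ≤ τ) →
      |φ νhat x - φ ν' x| ≤ η)
    (hyp2 : ENNReal.ofReal (1 - exp (-(ε / 2)) * δ / 3) *
        hInt (φ νhat) (ε / (4 * η)) (Aset φ νhat (τ + η)) ≤
      hInt (φ νhat) (ε / (4 * η)) (Aset φ νhat (τ - η))) :
    ∀ ν', Adj νhat ν' → ∀ E : Set (EuclideanSpace ℝ (Fin d)), MeasurableSet E →
      (EMech φ τ η ε νhat E ≤
          ENNReal.ofReal (exp (ε / 2) + 2 * δ / 3) * EMech φ τ η ε ν' E +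
            ENNReal.ofReal (δ / 3) ∧
        EMech φ τ η ε ν' E ≤
          ENNReal.ofReal (exp (ε / 2) + 2 * δ / 3) * EMech φ τ η ε νhat E +
            ENNReal.ofReal (δ / 3)) ∧
      (EMech φ τ η ε νhat E ≤
          ENNReal.ofReal (exp (ε / 2)) * EMech φ τ η ε ν' E + ENNReal.ofReal δ ∧
        EMech φ τ η ε ν' E ≤
          ENNReal.ofReal (exp (ε / 2)) * EMech φ τ η ε νhat E + ENNReal.ofReal δ) :=
  EMech_safe_general Adj φ hφmeas ε η τ δ hε hη hδ0 hδ νhat hfin hyp1 hyp2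

end
end

section
/- Local sensitivity of the univariate median via order statistics: for a univariate sample X_1, ..., X_n with order statistics X_{(1)} ≤ ... ≤ X_{(n)}, and any dataset Y obtained by changing at most k of the observations (k < n/2 - 1), the medians satisfy |med(X) - med(Y)| ≤ max(X_{(m+k)} - X_{(m)}, X_{(m)} - X_{(m-k)}), where m = ⌊(n+1)/2⌋ and med denotes the middle order statistic (take the lower middle for even n). -/
/-! The `j`-th order statistic is at most `t` exactly when at least `j` observations are at most
`t`. Changing `k` observations moves each such count by at most `k`, so the median `Y_{(m)}` of
the perturbed sample is squeezed between `X_{(m-k)}` and `X_{(m+k)}`. -/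

open scoped Classical

/-- The `j`-th order statistic (1-indexed) of the sample `X 0, ..., X (n-1)`. -/
noncomputable def orderStat {n : ℕ} (X : Fin n → ℝ) (j : ℕ) : ℝ :=
  ((Multiset.map X Finset.univ.val).sort (· ≤ ·)).getD (j - 1) 0

/-- The sample median: the `⌊(n+1)/2⌋`-th order statistic (the lower middle for even `n`). -/
noncomputable def sampleMedian {n : ℕ} (X : Fin n → ℝ) : ℝ :=
  orderStat X ((n + 1) / 2)

theorem List.SortedLE.getElem_le_iff_lt_countP {α : Type*} [LinearOrder α] {l : List α}
    (hl : l.SortedLE) {j : ℕ} (hj : j < l.length) (t : α) :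
    l[j] ≤ t ↔ j < l.countP (· ≤ t) := by
  constructor
  · intro hjt
    have hprefix : (l.take (j + 1)).countP (· ≤ t) = j + 1 := by
      rw [List.countP_eq_length.2, List.length_take]
      · omega
      rintro _ ha
      obtain ⟨i, hi, rfl⟩ := List.mem_take_iff_getElem.1 ha
      simpa using (hl.getElem_le_getElem_of_le (by omega)).trans hjt
    calc j < (l.take (j + 1)).countP (· ≤ t) := by omega
      _ ≤ l.countP (· ≤ t) := (l.take_sublist _).countP_le
  · intro hcount
    by_contra! htj
    have hsuffix : (l.drop j).countP (· ≤ t) = 0 := by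
      refine List.countP_eq_zero.2 fun _ ha => ?_
      obtain ⟨i, hi, rfl⟩ := List.mem_drop_iff_getElem.1 ha
      simpa using htj.trans_le (hl.getElem_le_getElem_of_le (by omega))
    rw [← l.take_append_drop j, List.countP_append, hsuffix] at hcount
    have := (l.take j).countP_le_length (p := (· ≤ t))
    simp only [List.length_take] at this
    omega

theorem orderStat_le_iff {n : ℕ} (X : Fin n → ℝ) {j : ℕ} (hj₁ : 1 ≤ j) (hjn : j ≤ n)
    (t : ℝ) :
    orderStat X j ≤ t ↔ j ≤ (Finset.univ.filter (fun i => X i ≤ t)).card := by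
  set l := (Multiset.map X Finset.univ.val).sort (· ≤ ·)
  have hlen : l.length = n := by simp [l]
  have hcount : l.countP (· ≤ t) = (Finset.univ.filter (fun i => X i ≤ t)).card := by
    rw [← Multiset.coe_countP, Multiset.sort_eq, Multiset.countP_map]
    rfl
  have hsorted : l.SortedLE := (Multiset.pairwise_sort _ _).sortedLE
  change l.getD (j - 1) 0 ≤ t ↔ _
  rw [List.getD_eq_getElem _ _ (by omega),
    hsorted.getElem_le_iff_lt_countP (by omega), hcount]
  omega

theorem Finset.card_filter_le_card_filter_add_card_filter_ne {ι α : Type*} [Fintype ι]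
    [DecidableEq α] (f g : ι → α) (p : α → Prop) [DecidablePred p] :
    (Finset.univ.filter (fun i => p (f i))).card ≤
      (Finset.univ.filter (fun i => p (g i))).card +
        (Finset.univ.filter (fun i => f i ≠ g i)).card :=
  calc _ ≤ (Finset.univ.filter (fun i => p (g i)) ∪
          Finset.univ.filter (fun i => f i ≠ g i)).card :=
        Finset.card_le_card fun i => by by_cases h : f i = g i <;> simp_all
    _ ≤ _ := Finset.card_union_le _ _

theorem orderStat_le_orderStat_add_of_card_ne_le {n : ℕ} {X Y : Fin n → ℝ} {k : ℕ}
    (hdiff : (Finset.univ.filter (fun i => X i ≠ Y i)).card ≤ k) {j : ℕ} (hj : 1 ≤ j)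
    (hjk : j + k ≤ n) : orderStat Y j ≤ orderStat X (j + k) := by
  have hX := (orderStat_le_iff X (by omega) hjk (orderStat X (j + k))).1 le_rfl
  have hXY := Finset.card_filter_le_card_filter_add_card_filter_ne X Y (· ≤ orderStat X (j + k))
  rw [orderStat_le_iff Y hj (by omega)]
  omega

/-- Local sensitivity of the median via order statistics: if `Y` is obtained from `X` by
changing at most `k` observations, with `k < n/2 - 1`, then
`|med(X) - med(Y)| ≤ max(X_{(m+k)} - X_{(m)}, X_{(m)} - X_{(m-k)})` where
`m = ⌊(n+1)/2⌋`. -/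
theorem median_local_sensitivity {n : ℕ} (X Y : Fin n → ℝ) (k : ℕ)
    (hk : (k : ℝ) < (n : ℝ) / 2 - 1)
    (hdiff : (Finset.univ.filter (fun i => X i ≠ Y i)).card ≤ k) :
    |sampleMedian X - sampleMedian Y| ≤
      max (orderStat X ((n + 1) / 2 + k) - orderStat X ((n + 1) / 2))
        (orderStat X ((n + 1) / 2) - orderStat X ((n + 1) / 2 - k)) := by
  have hn : 2 * k + 2 < n := by
    have : ((2 * k + 2 : ℕ) : ℝ) < n := by push_cast; linarith
    exact_mod_cast this
  set m := (n + 1) / 2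
  have hupper : orderStat Y m ≤ orderStat X (m + k) :=
    orderStat_le_orderStat_add_of_card_ne_le hdiff (by omega) (by omega)
  have hlower : orderStat X (m - k) ≤ orderStat Y m := by
    have hdiff' : (Finset.univ.filter (fun i => Y i ≠ X i)).card ≤ k := by
      simpa only [ne_comm] using hdiff
    simpa only [Nat.sub_add_cancel (show k ≤ m by omega)] using
      orderStat_le_orderStat_add_of_card_ne_le hdiff' (j := m - k) (by omega) (by omega)
  change |orderStat X m - orderStat Y m| ≤ _
  rw [abs_sub_le_iff]
  exact ⟨(sub_le_sub_left hlower _).trans (le_max_right _ _),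
    (sub_le_sub_right hupper _).trans (le_max_left _ _)⟩
end
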